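/- arXiv:2504.12182 — 10 statements merged into one kernel-verified Lean document; each statement's English description precedes it below -/
import Mathlib

section
/- Let A be a continuous information frame. Then for all a, i, j ∈ A, X ∈ Con_i and Y ∈ Con_j: if X ⊨_i ({j} ∪ Y) and Y ⊨_j a, then X ⊨_i a. -/
open scoped Classical

/-! ### Continuous information frames -/

structure InfFrame (A : Type*) where
  Con : A → Set (Finset A)
  ent : A → Finset A → A → Prop

namespace InfFrame

variable {A B C : Type*}

/-- `X ⊨_i Y` : every element of `Y` is entailed by `X` at `i`. -/
def entS (𝔄 : InfFrame A) (i : A) (X Y : Finset A) : Prop :=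
  ∀ b ∈ Y, 𝔄.ent i X b

/-- The axioms of a continuous information frame. -/
structure IsCIF (𝔄 : InfFrame A) : Prop where
  self_con : ∀ i : A, ({i} : Finset A) ∈ 𝔄.Con i
  con_sub : ∀ (i : A) (X Y : Finset A), Y ⊆ X → X ∈ 𝔄.Con i → Y ∈ 𝔄.Con i
  sound : ∀ (i : A) (X Y : Finset A), X ∈ 𝔄.Con i → 𝔄.entS i X Y → Y ∈ 𝔄.Con i
  weaken : ∀ (i : A) (X Y : Finset A) (a : A),
    X ∈ 𝔄.Con i → Y ∈ 𝔄.Con i → X ⊆ Y → 𝔄.ent i X a → 𝔄.ent i Y a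
  cut : ∀ (i : A) (X Y : Finset A) (a : A),
    X ∈ 𝔄.Con i → 𝔄.entS i X Y → 𝔄.ent i Y a → 𝔄.ent i X a
  con_transfer : ∀ i j : A, ({i} : Finset A) ∈ 𝔄.Con j → 𝔄.Con i ⊆ 𝔄.Con j
  ent_transfer : ∀ (i j : A) (X : Finset A) (a : A),
    ({i} : Finset A) ∈ 𝔄.Con j → X ∈ 𝔄.Con i → 𝔄.ent i X a → 𝔄.ent j X a
  interp : ∀ (i : A) (X Y : Finset A), X ∈ 𝔄.Con i → 𝔄.entS i X Y →
    ∃ e : A, ∃ Z ∈ 𝔄.Con e, 𝔄.entS i X ({e} ∪ Z) ∧ 𝔄.entS e Z Y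

/-- Condition (S): a continuous information frame is strong. -/
def Strong (𝔄 : InfFrame A) : Prop :=
  ∀ i : A, ∀ X ∈ 𝔄.Con i, X ≠ {i} → 𝔄.entS i {i} X

/-- Condition (T): `t` is a truth element. -/
def IsTruth (𝔄 : InfFrame A) (t : A) : Prop :=
  ∀ i : A, 𝔄.ent i ∅ t

/-- Approximable families between continuous information frames. -/
structure IsApproxFam (𝔄 : InfFrame A) (𝔅 : InfFrame B)
    (H : A → Finset A → B → Prop) : Prop where
  af1 : ∀ (i : A) (X : Finset A) (k : B) (Y : Finset B) (b : B),
    X ∈ 𝔄.Con i → Y ∈ 𝔅.Con k → (∀ c ∈ ({k} : Finset B) ∪ Y, H i X c) →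
    𝔅.ent k Y b → H i X b
  af2 : ∀ (i : A) (X X' : Finset A) (b : B),
    X ∈ 𝔄.Con i → X' ∈ 𝔄.Con i → X ⊆ X' → H i X b → H i X' b
  af3 : ∀ (i : A) (X X' : Finset A) (b : B),
    X ∈ 𝔄.Con i → X' ∈ 𝔄.Con i → 𝔄.entS i X X' → H i X' b → H i X b
  af4 : ∀ (i j : A) (X : Finset A) (b : B),
    ({i} : Finset A) ∈ 𝔄.Con j → X ∈ 𝔄.Con i → H i X b → H j X b
  af5 : ∀ (i : A) (X : Finset A) (F : Finset B),
    X ∈ 𝔄.Con i → (∀ c ∈ F, H i X c) →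
    ∃ c : A, ∃ U ∈ 𝔄.Con c, ∃ e : B, ∃ V ∈ 𝔅.Con e,
      𝔄.entS i X ({c} ∪ U) ∧ (∀ d ∈ ({e} : Finset B) ∪ V, H c U d) ∧
      ∀ d ∈ F, 𝔅.ent e V d

/-- `H` respects the truth elements `t` and `t'`. -/
def RespectsTruth (H : A → Finset A → B → Prop) (t : A) (t' : B) : Prop :=
  H t ∅ t'

/-- Composition of approximable families (`𝔅` is the middle frame). -/
def compFam (𝔅 : InfFrame B)
    (G : A → Finset A → B → Prop) (H : B → Finset B → C → Prop) :
    A → Finset A → C → Prop :=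
  fun i X a => ∃ e : B, ∃ V ∈ 𝔅.Con e,
    (∀ c ∈ ({e} : Finset B) ∪ V, G i X c) ∧ H e V a

/-- Equality of families of relations `H_i ⊆ Con_i × B`. -/
def FamEq (𝔄 : InfFrame A) (H K : A → Finset A → B → Prop) : Prop :=
  ∀ i : A, ∀ X ∈ 𝔄.Con i, ∀ b : B, H i X b ↔ K i X b

end InfFrame

/-! ### (Simplified) continuous information systems -/

structure InfSys (S : Type*) where
  Con : Set (Finset S)
  ent : Finset S → S → Prop

namespace InfSys

variable {S T U : Type*}

/-- `X ⊢ Y` : every element of `Y` is entailed by `X`. -/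
def entS (𝕊 : InfSys S) (X Y : Finset S) : Prop := ∀ b ∈ Y, 𝕊.ent X b

/-- The axioms of a simplified continuous information system. -/
structure IsSCIS (𝕊 : InfSys S) : Prop where
  singleton_con : ∀ a : S, ({a} : Finset S) ∈ 𝕊.Con
  weaken : ∀ (X Y : Finset S) (a : S),
    X ∈ 𝕊.Con → Y ∈ 𝕊.Con → X ⊆ Y → 𝕊.ent X a → 𝕊.ent Y a
  cut : ∀ (X Y : Finset S) (a : S),
    X ∈ 𝕊.Con → Y ∈ 𝕊.Con → 𝕊.entS X Y → 𝕊.ent Y a → 𝕊.ent X a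
  interp : ∀ X ∈ 𝕊.Con, ∀ a : S, 𝕊.ent X a →
    ∃ Z ∈ 𝕊.Con, 𝕊.entS X Z ∧ 𝕊.ent Z a
  dir : ∀ X ∈ 𝕊.Con, ∀ F : Finset S, 𝕊.entS X F →
    ∃ Z ∈ 𝕊.Con, F ⊆ Z ∧ 𝕊.entS X Z

/-- The axioms of a continuous information system. -/
structure IsCIS (𝕊 : InfSys S) extends IsSCIS 𝕊 : Prop where
  insert_con : ∀ X ∈ 𝕊.Con, ∀ a : S, 𝕊.ent X a → X ∪ {a} ∈ 𝕊.Con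

/-- Approximable mappings between (simplified) continuous information systems. -/
structure IsApproxMap (𝕊 : InfSys S) (𝕋 : InfSys T)
    (H : Finset S → T → Prop) : Prop where
  am1 : ∀ X ∈ 𝕊.Con, ∀ Y ∈ 𝕋.Con, ∀ b : T,
    (∀ c ∈ Y, H X c) → 𝕋.ent Y b → H X b
  am2 : ∀ X ∈ 𝕊.Con, ∀ X' ∈ 𝕊.Con, ∀ b : T, X' ⊆ X → H X' b → H X b
  am3 : ∀ X ∈ 𝕊.Con, ∀ X' ∈ 𝕊.Con, ∀ b : T, 𝕊.entS X X' → H X' b → H X b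
  am4 : ∀ X ∈ 𝕊.Con, ∀ b : T, H X b →
    ∃ Z ∈ 𝕊.Con, ∃ Z' ∈ 𝕋.Con, 𝕊.entS X Z ∧ (∀ c ∈ Z', H Z c) ∧ 𝕋.ent Z' b
  am5 : ∀ X ∈ 𝕊.Con, ∀ F : Finset T, (∀ c ∈ F, H X c) →
    ∃ Z ∈ 𝕋.Con, F ⊆ Z ∧ ∀ c ∈ Z, H X c

/-- Relational composition of approximable mappings (`𝕋` is the middle system). -/
def compMap (𝕋 : InfSys T) (H : Finset S → T → Prop) (G : Finset T → U → Prop) :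
    Finset S → U → Prop :=
  fun X u => ∃ Y ∈ 𝕋.Con, (∀ b ∈ Y, H X b) ∧ G Y u

/-- Equality of relations `H ⊆ Con × U`. -/
def MapEq (𝕊 : InfSys S) (H K : Finset S → U → Prop) : Prop :=
  ∀ X ∈ 𝕊.Con, ∀ u : U, H X u ↔ K X u

end InfSys

/-! ### The constructions F, S, T and W -/

/-- The tokens of the frame `F(𝕊)`: the consistent sets of `𝕊`. -/
abbrev ConTok {S : Type*} (𝕊 : InfSys S) : Type _ := {X : Finset S // X ∈ 𝕊.Con}

/-- The frame `F(𝕊)` associated with a simplified continuous information system. -/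
def Fframe {S : Type*} (𝕊 : InfSys S) : InfFrame (ConTok 𝕊) where
  Con X := {𝔛 | 𝔛 = {X} ∨ ∀ Y ∈ 𝔛, 𝕊.entS X.1 Y.1}
  ent X 𝔛 Y := ∃ E ∈ 𝔛 ∪ ({X} : Finset (ConTok 𝕊)), 𝕊.entS E.1 Y.1

/-- The action of `F` on approximable mappings. -/
def Fmap {S T : Type*} (𝕊 : InfSys S) (𝕋 : InfSys T) (H : Finset S → T → Prop) :
    ConTok 𝕊 → Finset (ConTok 𝕊) → ConTok 𝕋 → Prop :=
  fun X 𝔛 Y => ∃ E ∈ 𝔛 ∪ ({X} : Finset (ConTok 𝕊)), ∀ b ∈ Y.1, H E.1 b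

/-- The information system `S(𝔄)` associated with a (strong) continuous information frame. -/
def Ssys {A : Type*} (𝔄 : InfFrame A) : InfSys A where
  Con := {X | ∃ a : A, ∃ Xb ∈ 𝔄.Con a, X = Xb ∪ {a}}
  ent X c := ∃ a : A, ∃ Xb ∈ 𝔄.Con a, X = Xb ∪ {a} ∧
    (𝔄.ent a Xb c ∨ 𝔄.ent a {a} c)

/-- The action of `S` on approximable families. -/
def Smap {A B : Type*} (𝔄 : InfFrame A) (H : A → Finset A → B → Prop) :
    Finset A → B → Prop :=
  fun X b => ∃ a : A, ∃ Xb ∈ 𝔄.Con a, X = Xb ∪ {a} ∧ (H a Xb b ∨ H a {a} b)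

/-- The tokens of the frame `T(𝔄)`: pairs `(a, X)` with `X ∈ Con_a`. -/
abbrev TTok {A : Type*} (𝔄 : InfFrame A) : Type _ := {p : A × Finset A // p.2 ∈ 𝔄.Con p.1}

/-- The strong frame `T(𝔄)` associated with a continuous information frame. -/
def Tframe {A : Type*} (𝔄 : InfFrame A) : InfFrame (TTok 𝔄) where
  Con aX := {𝔜 | 𝔜 = {aX} ∨ ∀ bY ∈ 𝔜, 𝔄.entS aX.1.1 aX.1.2 ({bY.1.1} ∪ bY.1.2)}
  ent aX 𝔛 eV := ∃ cZ ∈ 𝔛 ∪ ({aX} : Finset (TTok 𝔄)),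
    𝔄.entS cZ.1.1 cZ.1.2 ({eV.1.1} ∪ eV.1.2)

/-- The action of `T` on approximable families. -/
def Tmap {A B : Type*} (𝔄 : InfFrame A) (𝔅 : InfFrame B)
    (H : A → Finset A → B → Prop) :
    TTok 𝔄 → Finset (TTok 𝔄) → TTok 𝔅 → Prop :=
  fun aX 𝔛 bY => ∃ cZ ∈ 𝔛 ∪ ({aX} : Finset (TTok 𝔄)),
    ∀ d ∈ ({bY.1.1} : Finset B) ∪ bY.1.2, H cZ.1.1 cZ.1.2 d

/-- Removing the adjoined truth token: `X \ {t}` as a finite subset of `A`. -/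
noncomputable def unsome {A : Type*} (X : Finset (Option A)) : Finset A :=
  X.preimage some (Option.some_injective A).injOn

/-- The frame `W(𝔄)`: `𝔄` extended by a (fresh) truth element `none`. -/
def Wframe {A : Type*} (𝔄 : InfFrame A) : InfFrame (Option A) where
  Con a :=
    match a with
    | some a => {X | ∃ Y ∈ 𝔄.Con a, X = Y.image some ∨ X = Y.image some ∪ {none}}
    | none => {X | X = {none} ∨ X = ∅}
  ent a X c :=
    match a, c with
    | _, none => True
    | none, some _ => False
    | some a', some c' => 𝔄.ent a' (unsome X) c'

/-- Lemma 4 (`lem-strong6`): the strong cut rule in a continuous information frame. -/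
theorem cif_strong_cut {A : Type*} (𝔄 : InfFrame A) (h : 𝔄.IsCIF) :
    ∀ (a i j : A) (X Y : Finset A), X ∈ 𝔄.Con i → Y ∈ 𝔄.Con j →
      𝔄.entS i X ({j} ∪ Y) → 𝔄.ent j Y a → 𝔄.ent i X a := by
  intro a i j X Y hX hY hXjY hYa
  obtain ⟨e, Z, hZ, hXeZ, hZjY⟩ := h.interp i X ({j} ∪ Y) hX hXjY
  have hje : ({j} : Finset A) ∈ 𝔄.Con e := by
    apply h.sound e Z {j} hZ
    intro b hb
    exact hZjY b (Finset.mem_union_left _ hb)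
  have hYe : Y ∈ 𝔄.Con e := h.con_transfer j e hje hY
  have hYea : 𝔄.ent e Y a := h.ent_transfer j e Y a hje hY hYa
  have hZY : 𝔄.entS e Z Y := fun b hb => hZjY b (Finset.mem_union_right _ hb)
  have hZa : 𝔄.ent e Z a := h.cut e Z Y a hZ hZY hYea
  have hei : ({e} : Finset A) ∈ 𝔄.Con i := by
    apply h.sound i X {e} hX
    intro b hb
    exact hXeZ b (Finset.mem_union_left _ hb)
  have hZia : 𝔄.ent i Z a := h.ent_transfer e i Z a hei hZ hZa
  have hXZ : 𝔄.entS i X Z := fun b hb => hXeZ b (Finset.mem_union_right _ hb)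
  exact h.cut i X Z a hX hXZ hZia
end

section
/- Let A and A' be continuous information frames and let (H_i)_{i∈A} be a family of relations H_i ⊆ Con_i × A' satisfying conditions (1)–(4) of approximable families. Then condition (5) (for X ∈ Con_i and finite F ⊆ A': X H_i F implies there are c ∈ A, e ∈ A', U ∈ Con_c, V ∈ Con'_e with X ⊨_i ({c} ∪ U), U H_c ({e} ∪ V) and V ⊨'_e F) holds if and only if the following two conditions hold for all i ∈ A, X ∈ Con_i and finite F ⊆ A': (a) X H_i F implies there are c ∈ A and U ∈ Con_c with X ⊨_i ({c} ∪ U) and U H_c F; (b) X H_i F implies there are e ∈ A' and V ∈ Con'_e with X H_i ({e} ∪ V) and V ⊨'_e F. -/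
open scoped Classical

/-- Lemma 6 (`pn-amint`): for families satisfying conditions (1)-(4) of approximable
families, condition (5) is equivalent to conditions (a) and (b). -/
theorem cif_approxFam_interp_iff {A B : Type*} (𝔄 : InfFrame A) (𝔅 : InfFrame B)
    (hA : 𝔄.IsCIF) (hB : 𝔅.IsCIF) (H : A → Finset A → B → Prop)
    (h1 : ∀ (i : A) (X : Finset A) (k : B) (Y : Finset B) (b : B),
      X ∈ 𝔄.Con i → Y ∈ 𝔅.Con k → (∀ c ∈ ({k} : Finset B) ∪ Y, H i X c) →
      𝔅.ent k Y b → H i X b)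
    (h2 : ∀ (i : A) (X X' : Finset A) (b : B),
      X ∈ 𝔄.Con i → X' ∈ 𝔄.Con i → X ⊆ X' → H i X b → H i X' b)
    (h3 : ∀ (i : A) (X X' : Finset A) (b : B),
      X ∈ 𝔄.Con i → X' ∈ 𝔄.Con i → 𝔄.entS i X X' → H i X' b → H i X b)
    (h4 : ∀ (i j : A) (X : Finset A) (b : B),
      ({i} : Finset A) ∈ 𝔄.Con j → X ∈ 𝔄.Con i → H i X b → H j X b) :
    (∀ (i : A), ∀ X ∈ 𝔄.Con i, ∀ F : Finset B, (∀ c ∈ F, H i X c) →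
        ∃ c : A, ∃ U ∈ 𝔄.Con c, ∃ e : B, ∃ V ∈ 𝔅.Con e,
          𝔄.entS i X ({c} ∪ U) ∧ (∀ d ∈ ({e} : Finset B) ∪ V, H c U d) ∧
          ∀ d ∈ F, 𝔅.ent e V d)
      ↔ ((∀ (i : A), ∀ X ∈ 𝔄.Con i, ∀ F : Finset B, (∀ c ∈ F, H i X c) →
            ∃ c : A, ∃ U ∈ 𝔄.Con c, 𝔄.entS i X ({c} ∪ U) ∧ ∀ d ∈ F, H c U d)
        ∧ (∀ (i : A), ∀ X ∈ 𝔄.Con i, ∀ F : Finset B, (∀ c ∈ F, H i X c) →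
            ∃ e : B, ∃ V ∈ 𝔅.Con e, (∀ d ∈ ({e} : Finset B) ∪ V, H i X d) ∧
              ∀ d ∈ F, 𝔅.ent e V d)) := by
  constructor
  · intro h5
    constructor
    · intro i X hX F hF
      obtain ⟨c, U, hU, e, V, hV, hent, hH, hent'⟩ := h5 i X hX F hF
      exact ⟨c, U, hU, hent, fun d hd => h1 c U e V d hU hV hH (hent' d hd)⟩
    · intro i X hX F hF
      obtain ⟨c, U, hU, e, V, hV, hent, hH, hent'⟩ := h5 i X hX F hF
      have hcU : ({c} ∪ U : Finset A) ∈ 𝔄.Con i := hA.sound i X _ hX hent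
      have hUi : U ∈ 𝔄.Con i := hA.con_sub i _ U Finset.subset_union_right hcU
      have hci : ({c} : Finset A) ∈ 𝔄.Con i :=
        hA.con_sub i _ _ Finset.subset_union_left hcU
      refine ⟨e, V, hV, fun d hd => ?_, hent'⟩
      have hiU : H i U d := h4 c i U d hci hU (hH d hd)
      exact h3 i X U d hX hUi
        (fun b hb => hent b (Finset.mem_union_right _ hb)) hiU
  · rintro ⟨ha, hb⟩ i X hX F hF
    obtain ⟨e, V, hV, hH, hent'⟩ := hb i X hX F hF
    obtain ⟨c, U, hU, hent, hH'⟩ := ha i X hX ({e} ∪ V) hH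
    exact ⟨c, U, hU, e, V, hV, hent, hH', hent'⟩
end

section
/- Let H be an approximable family between continuous information frames A and A'. Then for all i, j ∈ A, X ∈ Con_i, Y ∈ Con_j and b ∈ A': if X ⊨_i ({j} ∪ Y) and Y H_j b, then X H_i b. -/
open scoped Classical

/-- Lemma 7 (`lem-amstrong3`): the strong version of condition (3) for
approximable families between continuous information frames. -/
theorem approxFam_strong_cut {A B : Type*} (𝔄 : InfFrame A) (𝔅 : InfFrame B)
    (hA : 𝔄.IsCIF) (hB : 𝔅.IsCIF) (H : A → Finset A → B → Prop)
    (hH : InfFrame.IsApproxFam 𝔄 𝔅 H) :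
    ∀ (i j : A) (X Y : Finset A) (b : B), X ∈ 𝔄.Con i → Y ∈ 𝔄.Con j →
      𝔄.entS i X ({j} ∪ Y) → H j Y b → H i X b := by
  intro i j X Y b hX hY hent hH'
  have hjY : ({j} : Finset A) ∪ Y ∈ 𝔄.Con i := hA.sound i X _ hX hent
  have hj : ({j} : Finset A) ∈ 𝔄.Con i :=
    hA.con_sub i _ _ (Finset.subset_union_left) hjY
  have hYi : Y ∈ 𝔄.Con i := hA.con_sub i _ _ (Finset.subset_union_right) hjY
  have h1 : H i Y b := hH.af4 j i Y b hj hY hH'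
  exact hH.af3 i X Y b hX hYi
    (fun c hc => hent c (Finset.mem_union_right _ hc)) h1
end

section
/- For ν = 1, 2, 3 let A^(ν) be continuous information frames, G an approximable family from A^(1) to A^(2) and H an approximable family from A^(2) to A^(3). Define the composition G ∘ H = ((G∘H)_i)_{i∈A^(1)} by: X (G∘H)_i a iff there are e ∈ A^(2) and V ∈ Con^(2)_e with X G_i ({e} ∪ V) and V H_e a. Then: (1) G ∘ H is an approximable family from A^(1) to A^(3); (2) if G and H respect existing truth elements, so does G ∘ H; (3) Id_{A^(1)} ∘ G = G and G ∘ Id_{A^(2)} = G, where Id_A denotes the family (⊨_i)_{i∈A} of entailment relations of A, which is an approximable family from A to A. -/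
open scoped Classical

section Aux

open InfFrame

variable {A B C : Type*}

lemma pull_fam {𝔄 : InfFrame A} {𝔅 : InfFrame B} (hA : 𝔄.IsCIF)
    {F : A → Finset A → B → Prop} (hF : InfFrame.IsApproxFam 𝔄 𝔅 F)
    (i j : A) (X Z : Finset A) (b : B) (hX : X ∈ 𝔄.Con i) (hZ : Z ∈ 𝔄.Con j)
    (hent : 𝔄.entS i X ({j} ∪ Z)) (hFb : F j Z b) : F i X b := by
  have hj : ({j} : Finset A) ∈ 𝔄.Con i :=
    hA.sound i X {j} hX (fun c hc => hent c (Finset.mem_union_left _ hc))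
  have hZi : Z ∈ 𝔄.Con i := hA.con_transfer j i hj hZ
  have h4 := hF.af4 j i Z b hj hZ hFb
  exact hF.af3 i X Z b hX hZi (fun c hc => hent c (Finset.mem_union_right _ hc)) h4

lemma comp_key {𝔄 : InfFrame A} {𝔅 : InfFrame B} {ℭ : InfFrame C}
    (hA : 𝔄.IsCIF) (hB : 𝔅.IsCIF)
    {G : A → Finset A → B → Prop} {H : B → Finset B → C → Prop}
    (hG : InfFrame.IsApproxFam 𝔄 𝔅 G) (hH : InfFrame.IsApproxFam 𝔅 ℭ H)
    (i : A) (X : Finset A) (F : Finset C) (hX : X ∈ 𝔄.Con i)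
    (hKF : ∀ c ∈ F, InfFrame.compFam 𝔅 G H i X c) :
    ∃ c₀ : A, ∃ U ∈ 𝔄.Con c₀, ∃ e : B, ∃ V ∈ 𝔅.Con e,
      𝔄.entS i X ({c₀} ∪ U) ∧ (∀ d ∈ ({e} : Finset B) ∪ V, G c₀ U d) ∧
      ∀ c ∈ F, H e V c := by
  classical
  -- uniformize witnesses
  have key : ∃ W : Finset B, (∀ d ∈ W, G i X d) ∧
      ∀ c ∈ F, ∃ e : B, ∃ V ∈ 𝔅.Con e, (({e} : Finset B) ∪ V) ⊆ W ∧ H e V c := by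
    induction F using Finset.induction_on with
    | empty => exact ⟨∅, fun d hd => absurd hd (Finset.notMem_empty d), fun c hc => absurd hc (Finset.notMem_empty c)⟩
    | @insert a s ha ih =>
      obtain ⟨W, hW1, hW2⟩ := ih (fun c hc => hKF c (Finset.mem_insert_of_mem hc))
      obtain ⟨e, V, hV, hGXe, hHa⟩ := hKF a (Finset.mem_insert_self a s)
      refine ⟨W ∪ ({e} ∪ V), ?_, ?_⟩
      · intro d hd
        rcases Finset.mem_union.1 hd with hd | hd
        · exact hW1 d hd
        · exact hGXe d hd
      · intro c hc
        rcases Finset.mem_insert.1 hc with rfl | hc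
        · exact ⟨e, V, hV, Finset.subset_union_right, hHa⟩
        · obtain ⟨e', V', hV', hsub, hH'⟩ := hW2 c hc
          exact ⟨e', V', hV', hsub.trans Finset.subset_union_left, hH'⟩
  obtain ⟨W, hW1, hW2⟩ := key
  obtain ⟨c₀, U, hU, e, V, hV, hXent, hGU, hWent⟩ := hG.af5 i X W hX hW1
  refine ⟨c₀, U, hU, e, V, hV, hXent, hGU, ?_⟩
  intro c hc
  obtain ⟨e', V', hV', hsub, hH'⟩ := hW2 c hc
  exact pull_fam hB hH e e' V V' c hV hV' (fun d hd => hWent d (hsub hd)) hH'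

end Aux

/-- Lemma 8 (`lem-amprop`): composition of approximable families is an approximable
family, respects truth elements, and the entailment families are identities
(they are approximable families from a frame to itself). -/
theorem approxFam_comp_props {A B C : Type*}
    (𝔄 : InfFrame A) (𝔅 : InfFrame B) (ℭ : InfFrame C)
    (hA : 𝔄.IsCIF) (hB : 𝔅.IsCIF) (hC : ℭ.IsCIF)
    (G : A → Finset A → B → Prop) (H : B → Finset B → C → Prop)
    (hG : InfFrame.IsApproxFam 𝔄 𝔅 G) (hH : InfFrame.IsApproxFam 𝔅 ℭ H) :
    InfFrame.IsApproxFam 𝔄 ℭ (InfFrame.compFam 𝔅 G H) ∧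
    (∀ (t : A) (t' : B) (t'' : C), 𝔄.IsTruth t → 𝔅.IsTruth t' → ℭ.IsTruth t'' →
      InfFrame.RespectsTruth G t t' → InfFrame.RespectsTruth H t' t'' →
      InfFrame.RespectsTruth (InfFrame.compFam 𝔅 G H) t t'') ∧
    InfFrame.IsApproxFam 𝔄 𝔄 𝔄.ent ∧
    InfFrame.FamEq 𝔄 (InfFrame.compFam 𝔄 𝔄.ent G) G ∧
    InfFrame.FamEq 𝔄 (InfFrame.compFam 𝔅 G 𝔅.ent) G := by
  constructor
  · -- composition is an approximable family
    set K := InfFrame.compFam 𝔅 G H with hKdef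
    constructor
    · -- af1
      intro i X k Y b hX hY hKall hent
      obtain ⟨c₀, U, hU, e, V, hV, hXent, hGU, hHall⟩ :=
        comp_key hA hB hG hH i X (({k} : Finset C) ∪ Y) hX hKall
      have hHb : H e V b := hH.af1 e V k Y b hV hY hHall hent
      exact ⟨e, V, hV, fun d hd => pull_fam hA hG i c₀ X U d hX hU hXent (hGU d hd), hHb⟩
    · -- af2
      intro i X X' b hX hX' hsub hK
      obtain ⟨e, V, hV, hGall, hHb⟩ := hK
      exact ⟨e, V, hV, fun c hc => hG.af2 i X X' c hX hX' hsub (hGall c hc), hHb⟩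
    · -- af3
      intro i X X' b hX hX' hent hK
      obtain ⟨e, V, hV, hGall, hHb⟩ := hK
      exact ⟨e, V, hV, fun c hc => hG.af3 i X X' c hX hX' hent (hGall c hc), hHb⟩
    · -- af4
      intro i j X b hij hX hK
      obtain ⟨e, V, hV, hGall, hHb⟩ := hK
      exact ⟨e, V, hV, fun c hc => hG.af4 i j X c hij hX (hGall c hc), hHb⟩
    · -- af5
      intro i X F hX hKF
      obtain ⟨c₀, U, hU, e, V, hV, hXent, hGU, hHF⟩ :=
        comp_key hA hB hG hH i X F hX hKF
      obtain ⟨c₁, U₁, hU₁, e₂, V₂, hV₂, hVent, hHU₁, hFent⟩ := hH.af5 e V F hV hHF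
      refine ⟨c₀, U, hU, e₂, V₂, hV₂, hXent, ?_, hFent⟩
      intro d hd
      exact ⟨c₁, U₁, hU₁,
        fun x hx => hG.af1 c₀ U e V x hU hV hGU (hVent x hx), hHU₁ d hd⟩
  constructor
  · -- truth elements
    intro t t' t'' _ _ _ hGt hHt
    have hEmp : (∅ : Finset B) ∈ 𝔅.Con t' :=
      hB.con_sub t' {t'} ∅ (Finset.empty_subset _) (hB.self_con t')
    refine ⟨t', ∅, hEmp, ?_, hHt⟩
    intro c hc
    have : c = t' := by simpa using hc
    subst this; exact hGt
  constructor
  · -- ent is an approximable family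
    constructor
    · intro i X k Y b hX hY hall hent
      have hk : ({k} : Finset A) ∈ 𝔄.Con i :=
        hA.sound i X {k} hX (fun c hc => hall c (Finset.mem_union_left _ hc))
      have hYb : 𝔄.ent i Y b := hA.ent_transfer k i Y b hk hY hent
      exact hA.cut i X Y b hX (fun c hc => hall c (Finset.mem_union_right _ hc)) hYb
    · intro i X X' b hX hX' hsub h
      exact hA.weaken i X X' b hX hX' hsub h
    · intro i X X' b hX _ hent h
      exact hA.cut i X X' b hX hent h
    · intro i j X b hij hX h
      exact hA.ent_transfer i j X b hij hX h
    · intro i X F hX hent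
      obtain ⟨e, Z, hZ, h1, h2⟩ := hA.interp i X F hX hent
      obtain ⟨c, U, hU, h3, h4⟩ := hA.interp i X ({e} ∪ Z) hX h1
      exact ⟨c, U, hU, e, Z, hZ, h3, h4, h2⟩
  constructor
  · -- Id ∘ G = G
    intro i X hX b
    constructor
    · rintro ⟨e, V, hV, hall, hGb⟩
      exact pull_fam hA hG i e X V b hX hV hall hGb
    · intro hGb
      obtain ⟨c, U, hU, e, V, hV, hXent, hGU, hVent⟩ :=
        hG.af5 i X {b} hX (by simpa using hGb)
      have : G c U b := hG.af1 c U e V b hU hV hGU (hVent b (Finset.mem_singleton_self b))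
      exact ⟨c, U, hU, hXent, this⟩
  · -- G ∘ Id = G
    intro i X hX b
    constructor
    · rintro ⟨e, V, hV, hall, hent⟩
      exact hG.af1 i X e V b hX hV hall hent
    · intro hGb
      obtain ⟨c, U, hU, e, V, hV, hXent, hGU, hVent⟩ :=
        hG.af5 i X {b} hX (by simpa using hGb)
      refine ⟨e, V, hV, fun d hd => pull_fam hA hG i c X U d hX hU hXent (hGU d hd),
        hVent b (Finset.mem_singleton_self b)⟩
end

section
/- Let S = (S, Con, ⊢) be a simplified continuous information system. Define F(S) = (A, (Ĉon_X)_{X∈A}, (⊩_X)_{X∈A}) by: A = Con; Ĉon_X = { 𝔛 a finite set of elements of Con : 𝔛 = {X} or (for all Y ∈ 𝔛, X ⊢ Y) }; and 𝔛 ⊩_X Y iff there is E ∈ 𝔛 ∪ {X} with E ⊢ Y. Then F(S) is a strong continuous information frame. -/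
open scoped Classical

/-- Key lemma: frame entailment at `i` from a set consistent at `i` gives
system entailment from `i.1`. -/
private lemma Fframe_key {S : Type*} (𝕊 : InfSys S) (h : 𝕊.IsSCIS)
    {i : ConTok 𝕊} {X : Finset (ConTok 𝕊)} (hX : X ∈ (Fframe 𝕊).Con i)
    {b : ConTok 𝕊} (hb : (Fframe 𝕊).ent i X b) : 𝕊.entS i.1 b.1 := by
  obtain ⟨E, hE, hEb⟩ := hb
  simp only [Finset.mem_union, Finset.mem_singleton] at hE
  rcases hE with hE | rfl
  · rcases hX with hX | hX
    · subst hX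
      simp only [Finset.mem_singleton] at hE
      subst hE
      exact hEb
    · intro c hc
      exact h.cut i.1 E.1 c i.2 E.2 (hX E hE) (hEb c hc)
  · exact hEb


/-- Theorem 2 (`thm-sisif`): for a simplified continuous information system `𝕊`,
`F(𝕊)` is a strong continuous information frame. -/
theorem Fframe_isStrongCIF {S : Type*} (𝕊 : InfSys S) (h : 𝕊.IsSCIS) :
    (Fframe 𝕊).IsCIF ∧ (Fframe 𝕊).Strong := by
  constructor
  · constructor
    · -- self_con
      intro i; exact Or.inl rfl
    · -- con_sub
      intro i X Y hYX hX
      rcases hX with hX | hX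
      · subst hX
        rcases Finset.subset_singleton_iff.mp hYX with rfl | rfl
        · exact Or.inr (by simp)
        · exact Or.inl rfl
      · exact Or.inr fun Z hZ => hX Z (hYX hZ)
    · -- sound
      intro i X Y hX hXY
      exact Or.inr fun Z hZ => Fframe_key 𝕊 h hX (hXY Z hZ)
    · -- weaken
      intro i X Y a hX hY hXY ⟨E, hE, hEa⟩
      refine ⟨E, ?_, hEa⟩
      simp only [Finset.mem_union, Finset.mem_singleton] at hE ⊢
      rcases hE with hE | rfl
      · exact Or.inl (hXY hE)
      · exact Or.inr rfl
    · -- cut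
      intro i X Y a hX hXY ⟨E, hE, hEa⟩
      simp only [Finset.mem_union, Finset.mem_singleton] at hE
      rcases hE with hE | rfl
      · obtain ⟨E', hE', hE'E⟩ := hXY E hE
        refine ⟨E', hE', fun c hc => ?_⟩
        exact h.cut E'.1 E.1 c E'.2 E.2 hE'E (hEa c hc)
      · exact ⟨E, by simp, hEa⟩
    · -- con_transfer
      intro i j hij X hX
      rcases hij with hij | hij
      · rw [Finset.singleton_inj] at hij
        subst hij; exact hX
      · have hji : 𝕊.entS j.1 i.1 := hij i (by simp)
        rcases hX with hX | hX
        · subst hX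
          exact Or.inr (by simpa using hji)
        · refine Or.inr fun Y hY c hc => ?_
          exact h.cut j.1 i.1 c j.2 i.2 hji (hX Y hY c hc)
    · -- ent_transfer
      intro i j X a hij hX ⟨E, hE, hEa⟩
      simp only [Finset.mem_union, Finset.mem_singleton] at hE
      rcases hE with hE | rfl
      · exact ⟨E, by simp [hE], hEa⟩
      · rcases hij with hij | hij
        · rw [Finset.singleton_inj] at hij
          subst hij
          exact ⟨E, by simp, hEa⟩
        · have hji : 𝕊.entS j.1 E.1 := hij E (by simp)
          refine ⟨j, by simp, fun c hc => ?_⟩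
          exact h.cut j.1 E.1 c j.2 E.2 hji (hEa c hc)
    · -- interp
      intro i X Y hX hXY
      classical
      -- i ⊢ every token of every member of Y
      have hib : ∀ b ∈ Y, 𝕊.entS i.1 b.1 := fun b hb => Fframe_key 𝕊 h hX (hXY b hb)
      set F : Finset S := Y.biUnion (fun b => b.1) with hF
      have hiF : 𝕊.entS i.1 F := by
        intro c hc
        simp only [hF, Finset.mem_biUnion] at hc
        obtain ⟨b, hb, hcb⟩ := hc
        exact hib b hb c hcb
      obtain ⟨Z₀, hZ₀con, hFZ₀, hiZ₀⟩ := h.dir i.1 i.2 F hiF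
      -- for each a ∈ Z₀, interpolate
      have hint : ∀ a ∈ Z₀, ∃ Za ∈ 𝕊.Con, 𝕊.entS i.1 Za ∧ 𝕊.ent Za a :=
        fun a ha => h.interp i.1 i.2 a (hiZ₀ a ha)
      choose! Za hZacon hiZa hZaa using hint
      set G : Finset S := Z₀.biUnion (fun a => if a ∈ Z₀ then Za a else ∅) with hG
      have hiG : 𝕊.entS i.1 G := by
        intro c hc
        simp only [hG, Finset.mem_biUnion] at hc
        obtain ⟨a, ha, hca⟩ := hc
        rw [if_pos ha] at hca
        exact hiZa a ha c hca
      obtain ⟨W, hWcon, hGW, hiW⟩ := h.dir i.1 i.2 G hiG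
      have hWZ₀ : 𝕊.entS W Z₀ := by
        intro a ha
        have hsub : Za a ⊆ W := by
          intro c hc
          apply hGW
          simp only [hG, Finset.mem_biUnion]
          exact ⟨a, ha, by rw [if_pos ha]; exact hc⟩
        exact h.weaken (Za a) W a (hZacon a ha) hWcon hsub (hZaa a ha)
      refine ⟨⟨W, hWcon⟩, ∅, Or.inr (by simp), ?_, ?_⟩
      · intro b hb
        simp only [Finset.union_empty, Finset.mem_singleton] at hb
        subst hb
        exact ⟨i, by simp, hiW⟩
      · intro b hb
        refine ⟨⟨W, hWcon⟩, by simp, fun c hc => ?_⟩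
        exact hWZ₀ c (hFZ₀ (by simp only [hF, Finset.mem_biUnion]; exact ⟨b, hb, hc⟩))
  · -- Strong
    intro i X hX hXne
    rcases hX with hX | hX
    · exact absurd hX hXne
    · intro b hb
      exact ⟨i, by simp, hX b hb⟩
end

section
/- Let S and S' be simplified continuous information systems and H an approximable mapping from S to S'. For X ∈ Con define Ĥ_X ⊆ Ĉon_X × Con' by: 𝔛 Ĥ_X Y iff there is E ∈ 𝔛 ∪ {X} with E H Y. Then F(H) = (Ĥ_X)_{X∈Con} is an approximable family from F(S) to F(S'). -/
open scoped Classical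

private lemma mem_union'' {α : Type*} {D : DecidableEq α} {s t : Finset α} {a : α} :
    a ∈ @Union.union _ (@Finset.instUnion α D) s t ↔ a ∈ s ∨ a ∈ t :=
  @Finset.mem_union α D s t a

/-- Lemma 9 (`lem-apmapf`): `F(H)` is an approximable family from `F(𝕊)` to `F(𝕋)`. -/
theorem Fmap_isApproxFam {S T : Type*} (𝕊 : InfSys S) (𝕋 : InfSys T)
    (hS : 𝕊.IsSCIS) (hT : 𝕋.IsSCIS)
    (H : Finset S → T → Prop) (hH : InfSys.IsApproxMap 𝕊 𝕋 H) :
    InfFrame.IsApproxFam (Fframe 𝕊) (Fframe 𝕋) (Fmap 𝕊 𝕋 H) := by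

  constructor
  · -- af1
    rintro i X k Y b _hX _hY hmap ⟨E, hE, hEb⟩
    have hE' : E ∈ ({k} : Finset (ConTok 𝕋)) ∨ E ∈ Y := by
      rcases mem_union''.1 hE with h | h
      · exact Or.inr h
      · exact Or.inl h
    obtain ⟨D, hD, hHD⟩ := hmap E (mem_union''.2 hE')
    exact ⟨D, hD, fun t ht => hH.am1 D.1 D.2 E.1 E.2 t hHD (hEb t ht)⟩
  · -- af2
    rintro i X X' b _hX _hX' hsub ⟨E, hE, hHE⟩
    refine ⟨E, ?_, hHE⟩
    rcases mem_union''.1 hE with h | h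
    · exact mem_union''.2 <| Or.inl <| (hsub h)
    · exact mem_union''.2 <| Or.inr <| h
  · -- af3
    rintro i X X' b _hX _hX' hent ⟨E', hE', hHE'⟩
    rcases mem_union''.1 hE' with h | h
    · obtain ⟨E, hE, hent'⟩ := hent E' h
      exact ⟨E, hE, fun t ht => hH.am3 E.1 E.2 E'.1 E'.2 t hent' (hHE' t ht)⟩
    · have : E' = i := Finset.mem_singleton.1 h
      subst this
      exact ⟨E', mem_union''.2 <| Or.inr <| (Finset.mem_singleton_self _), hHE'⟩
  · -- af4
    rintro i j X b hij _hX ⟨E, hE, hHE⟩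
    rcases mem_union''.1 hE with h | h
    · exact ⟨E, mem_union''.2 <| Or.inl <| h, hHE⟩
    · have hEi : E = i := Finset.mem_singleton.1 h
      subst hEi
      rcases hij with h1 | h2
      · have : E = j := Finset.singleton_injective h1
        subst this
        exact ⟨E, mem_union''.2 <| Or.inr <| (Finset.mem_singleton_self _), hHE⟩
      · have hji : 𝕊.entS j.1 E.1 := h2 E (Finset.mem_singleton_self _)
        exact ⟨j, mem_union''.2 <| Or.inr <| (Finset.mem_singleton_self _),
          fun t ht => hH.am3 j.1 j.2 E.1 E.2 t hji (hHE t ht)⟩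
  · -- af5
    intro i X F hX hmap
    classical
    set G : Finset T := F.biUnion (fun c => c.1) with hGdef
    -- every token in G is mapped from i
    have hG : ∀ t ∈ G, H i.1 t := by
      intro t ht
      obtain ⟨c, hcF, htc⟩ := Finset.mem_biUnion.1 ht
      obtain ⟨E, hE, hHE⟩ := hmap c hcF
      rcases mem_union''.1 hE with h | h
      · rcases hX with h1 | h2
        · rw [h1, Finset.mem_singleton] at h
          subst h; exact hHE t htc
        · exact hH.am3 i.1 i.2 E.1 E.2 t (h2 E h) (hHE t htc)
      · have : E = i := Finset.mem_singleton.1 h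
        subst this; exact hHE t htc
    -- interpolate each token of G through H
    have h1 : ∀ t ∈ G, ∃ Z ∈ 𝕊.Con, ∃ Z' ∈ 𝕋.Con,
        𝕊.entS i.1 Z ∧ (∀ c ∈ Z', H Z c) ∧ 𝕋.ent Z' t :=
      fun t ht => hH.am4 i.1 i.2 t (hG t ht)
    choose Z hZcon Z' hZ'con hiZ hZZ' hZ't using h1
    set W : Finset S := G.attach.biUnion (fun t => Z t.1 t.2) with hWdef
    have hiW : 𝕊.entS i.1 W := by
      intro s hs
      obtain ⟨t, _, hst⟩ := Finset.mem_biUnion.1 hs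
      exact hiZ t.1 t.2 s hst
    obtain ⟨U, hUcon, hWU, hiU⟩ := hS.dir i.1 i.2 W hiW
    set W' : Finset T := G.attach.biUnion (fun t => Z' t.1 t.2) with hW'def
    have hUW' : ∀ t' ∈ W', H U t' := by
      intro t' ht'
      obtain ⟨t, _, ht't⟩ := Finset.mem_biUnion.1 ht'
      refine hH.am2 U hUcon (Z t.1 t.2) (hZcon t.1 t.2) t' ?_ (hZZ' t.1 t.2 t' ht't)
      exact fun s hs => hWU (Finset.mem_biUnion.2 ⟨t, Finset.mem_attach _ _, hs⟩)
    obtain ⟨V, hVcon, hW'V, hUV⟩ := hH.am5 U hUcon W' hUW'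
    have hVt : ∀ t ∈ G, 𝕋.ent V t := by
      intro t ht
      refine hT.weaken (Z' t ht) V t (hZ'con t ht) hVcon ?_ (hZ't t ht)
      exact fun s hs => hW'V (Finset.mem_biUnion.2 ⟨⟨t, ht⟩, Finset.mem_attach _ _, hs⟩)
    refine ⟨⟨U, hUcon⟩, ∅, ?_, ⟨V, hVcon⟩, ∅, ?_, ?_, ?_, ?_⟩
    · exact Or.inr (fun Y h => absurd h (Finset.notMem_empty Y))
    · exact Or.inr (fun Y h => absurd h (Finset.notMem_empty Y))
    · -- entS i X ({⟨U,_⟩} ∪ ∅)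
      intro c hc
      rcases mem_union''.1 hc with hc | hc
      swap
      · exact absurd hc (Finset.notMem_empty _)
      have hc := Finset.mem_singleton.1 hc
      subst hc
      exact ⟨i, mem_union''.2 <| Or.inr <| (Finset.mem_singleton_self _), hiU⟩
    · -- Fmap ⟨U,_⟩ ∅ d for d ∈ {⟨V,_⟩} ∪ ∅
      intro d hd
      rcases mem_union''.1 hd with hd | hd
      swap
      · exact absurd hd (Finset.notMem_empty _)
      have hd := Finset.mem_singleton.1 hd
      subst hd
      exact ⟨⟨U, hUcon⟩, mem_union''.2 <| Or.inr <| (Finset.mem_singleton_self _), hUV⟩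
    · -- ∀ d ∈ F, ent ⟨V,_⟩ ∅ d
      intro d hd
      refine ⟨⟨V, hVcon⟩, mem_union''.2 <| Or.inr <| (Finset.mem_singleton_self _), ?_⟩
      intro t ht
      exact hVt t (Finset.mem_biUnion.2 ⟨d, hd, ht⟩)
end

section
/- Let A be a strong continuous information frame. Define S(A) = (A, CON, ⊩) by: CON = { X finite ⊆ A : there are a ∈ A and X̄ ∈ Con_a with X = X̄ ∪ {a} }; and for X ∈ CON and c ∈ A: X ⊩ c iff there are a ∈ A and X̄ ∈ Con_a with X = X̄ ∪ {a} and (X̄ ⊨_a c or {a} ⊨_a c). Then S(A) is a continuous information system. -/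
open scoped Classical

section SsysAux

variable {A : Type*} {𝔄 : InfFrame A}

private lemma aux_con_a (h : 𝔄.IsCIF) {b a : A} {Yb : Finset A} (hYb : Yb ∈ 𝔄.Con b)
    (ha : a ∈ Yb ∪ ({b} : Finset A)) : ({a} : Finset A) ∈ 𝔄.Con b := by
  rcases Finset.mem_union.1 ha with h1 | h1
  · exact h.con_sub b Yb {a} (Finset.singleton_subset_iff.2 h1) hYb
  · obtain rfl := Finset.mem_singleton.1 h1
    exact h.self_con a

private lemma ssys_key (h : 𝔄.IsCIF) (hs : 𝔄.Strong) {a b c : A} {Xb : Finset A}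
    (hXb : Xb ∈ 𝔄.Con a) (hab : ({a} : Finset A) ∈ 𝔄.Con b)
    (hd : 𝔄.ent a Xb c ∨ 𝔄.ent a {a} c) : 𝔄.ent b {b} c := by
  rcases hd with hd | hd
  · have hXbb : Xb ∈ 𝔄.Con b := h.con_transfer a b hab hXb
    have h1 : 𝔄.ent b Xb c := h.ent_transfer a b Xb c hab hXb hd
    by_cases he : Xb = {b}
    · rwa [he] at h1
    · exact h.cut b {b} Xb c (h.self_con b) (hs b Xb hXbb he) h1
  · have h1 : 𝔄.ent b {a} c := h.ent_transfer a b {a} c hab (h.self_con a) hd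
    by_cases he : a = b
    · subst he; exact h1
    · have hne : ({a} : Finset A) ≠ {b} := by simp [he]
      exact h.cut b {b} {a} c (h.self_con b) (hs b {a} hab hne) h1

private lemma ssys_key2 (h : 𝔄.IsCIF) (hs : 𝔄.Strong) {X : Finset A} {c b : A}
    {Yb : Finset A} (hYb : Yb ∈ 𝔄.Con b) (hsub : X ⊆ Yb ∪ {b})
    (hx : (Ssys 𝔄).ent X c) : 𝔄.ent b {b} c := by
  obtain ⟨a, Xb, hXb, hX, hd⟩ := hx
  have ha : a ∈ Yb ∪ ({b} : Finset A) := by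
    apply hsub
    rw [hX]
    exact Finset.mem_union_right _ (Finset.mem_singleton_self a)
  exact ssys_key h hs hXb (aux_con_a h hYb ha) hd

end SsysAux

/-- Theorem 3 (`thm-ifsis`): for a strong continuous information frame `𝔄`,
`S(𝔄)` is a continuous information system. -/
theorem Ssys_isCIS {A : Type*} (𝔄 : InfFrame A) (h : 𝔄.IsCIF) (hs : 𝔄.Strong) :
    (Ssys 𝔄).IsCIS := by
  constructor
  case toIsSCIS =>
    constructor
    case singleton_con =>
      intro a
      exact ⟨a, {a}, h.self_con a, by simp⟩
    case weaken =>
      rintro X Y c _ ⟨b, Yb, hYb, rfl⟩ hsub hent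
      exact ⟨b, Yb, hYb, rfl, Or.inr (ssys_key2 h hs hYb hsub hent)⟩
    case cut =>
      rintro X Y c ⟨a, Xa, hXa, rfl⟩ ⟨b, Yb, hYb, hYeq⟩ hXY hYc
      have h1 : ∀ y ∈ Y, 𝔄.ent a {a} y :=
        fun y hy => ssys_key2 h hs hXa subset_rfl (hXY y hy)
      have hb : 𝔄.ent a {a} b := by
        apply h1
        rw [hYeq]
        exact Finset.mem_union_right _ (Finset.mem_singleton_self b)
      have hbCon : ({b} : Finset A) ∈ 𝔄.Con a :=
        h.sound a {a} {b} (h.self_con a) (fun d hd => by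
          obtain rfl := Finset.mem_singleton.1 hd; exact hb)
      have hc : 𝔄.ent b {b} c :=
        ssys_key2 h hs hYb (by rw [hYeq]) hYc
      have hc' : 𝔄.ent a {b} c :=
        h.ent_transfer b a {b} c hbCon (h.self_con b) hc
      have : 𝔄.ent a {a} c :=
        h.cut a {a} {b} c (h.self_con a) (fun d hd => by
          obtain rfl := Finset.mem_singleton.1 hd; exact hb) hc'
      exact ⟨a, Xa, hXa, rfl, Or.inr this⟩
    case interp =>
      rintro X ⟨b, Xb, hXb, rfl⟩ c hent
      have hc : 𝔄.ent b {b} c := ssys_key2 h hs hXb subset_rfl hent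
      obtain ⟨e, Z, hZ, h1, h2⟩ := h.interp b {b} {c} (h.self_con b)
        (fun d hd => by obtain rfl := Finset.mem_singleton.1 hd; exact hc)
      refine ⟨Z ∪ {e}, ⟨e, Z, hZ, rfl⟩, ?_, ?_⟩
      · intro z hz
        refine ⟨b, Xb, hXb, rfl, Or.inr (h1 z ?_)⟩
        rcases Finset.mem_union.1 hz with hz | hz
        · exact Finset.mem_union_right _ hz
        · exact Finset.mem_union_left _ hz
      · exact ⟨e, Z, hZ, rfl, Or.inl (h2 c (Finset.mem_singleton_self c))⟩
    case dir =>
      rintro X ⟨b, Xb, hXb, rfl⟩ F hF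
      have hF' : ∀ f ∈ F, 𝔄.ent b {b} f :=
        fun f hf => ssys_key2 h hs hXb subset_rfl (hF f hf)
      obtain ⟨e, Z, hZ, h1, h2⟩ := h.interp b {b} F (h.self_con b) hF'
      have hFe : F ∈ 𝔄.Con e := h.sound e Z F hZ h2
      refine ⟨F ∪ {e}, ⟨e, F, hFe, rfl⟩, Finset.subset_union_left, ?_⟩
      intro z hz
      rcases Finset.mem_union.1 hz with hz | hz
      · exact ⟨b, Xb, hXb, rfl, Or.inr (hF' z hz)⟩
      · obtain rfl := Finset.mem_singleton.1 hz
        exact ⟨b, Xb, hXb, rfl, Or.inr (h1 z (Finset.mem_union_left _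
          (Finset.mem_singleton_self z)))⟩
  case insert_con =>
    rintro X ⟨b, Xb, hXb, rfl⟩ c hent
    have hc : 𝔄.ent b {b} c := ssys_key2 h hs hXb subset_rfl hent
    have hstep : 𝔄.entS b {b} ((Xb ∪ {c}) \ {b}) := by
      intro d hd
      obtain ⟨hd1, hd2⟩ := Finset.mem_sdiff.1 hd
      rcases Finset.mem_union.1 hd1 with hd1 | hd1
      · by_cases he : Xb = {b}
        · exact absurd (he ▸ hd1) (by simpa using hd2)
        · exact hs b Xb hXb he d hd1
      · obtain rfl := Finset.mem_singleton.1 hd1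
        exact hc
    have hZ : (Xb ∪ {c}) \ {b} ∈ 𝔄.Con b := h.sound b {b} _ (h.self_con b) hstep
    refine ⟨b, (Xb ∪ {c}) \ {b}, hZ, ?_⟩
    rw [Finset.sdiff_union_self_eq_union]
    ext x
    simp only [Finset.mem_union, Finset.mem_singleton]
    tauto
end

section
/- Let A be a strong continuous information frame, X ∈ CON (the consistency predicate of S(A)) and F a finite subset of A with X ⊩ F (i.e., X ⊩ c for every c ∈ F, where ⊩ is the entailment of S(A)). Then there are a ∈ A and X̄ ∈ Con_a such that X = X̄ ∪ {a} and {a} ⊨_a F. -/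
open scoped Classical

/-- Lemma 10 (`lem-infosys-6-1`): in `S(𝔄)` entailment of a finite set can be
realised by a single consistency witness. -/
theorem Ssys_ent_witness {A : Type*} (𝔄 : InfFrame A) (h : 𝔄.IsCIF) (hs : 𝔄.Strong)
    (X : Finset A) (hX : X ∈ (Ssys 𝔄).Con) (F : Finset A)
    (hF : ∀ c ∈ F, (Ssys 𝔄).ent X c) :
    ∃ a : A, ∃ Xb ∈ 𝔄.Con a, X = Xb ∪ {a} ∧ 𝔄.entS a {a} F := by
  obtain ⟨a, Xb, hXb, hXeq⟩ := hX
  refine ⟨a, Xb, hXb, hXeq, ?_⟩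
  intro c hc
  obtain ⟨a', Xb', hXb', hXeq', hent⟩ := hF c hc
  have ha' : a' ∈ X := by rw [hXeq']; simp
  have ha'Con : ({a'} : Finset A) ∈ 𝔄.Con a := by
    rw [hXeq] at ha'
    simp only [Finset.mem_union, Finset.mem_singleton] at ha'
    rcases ha' with h1 | h1
    · exact h.con_sub a Xb {a'} (by simp [h1]) hXb
    · rw [h1]; exact h.self_con a
  have hXb'a : Xb' ∈ 𝔄.Con a := h.con_transfer a' a ha'Con hXb'
  rcases hent with hent | hent
  · have h1 : 𝔄.ent a Xb' c := h.ent_transfer a' a Xb' c ha'Con hXb' hent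
    by_cases hcase : Xb' = {a}
    · rwa [hcase] at h1
    · exact h.cut a {a} Xb' c (h.self_con a) (hs a Xb' hXb'a hcase) h1
  · have h1 : 𝔄.ent a {a'} c :=
      h.ent_transfer a' a {a'} c ha'Con (h.self_con a') hent
    by_cases hcase : a' = a
    · rwa [hcase] at h1
    · exact h.cut a {a} {a'} c (h.self_con a)
        (hs a {a'} ha'Con (by simpa using hcase)) h1
end

section
/- Let A and A' be strong continuous information frames and H an approximable family from A to A'. Define S(H) ⊆ CON × A' by: X S(H) b iff there are a ∈ A and X̄ ∈ Con_a with X = X̄ ∪ {a} and (X̄ H_a b or {a} H_a b). Then S(H) is an approximable mapping from S(A) to S(A'). -/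
open scoped Classical

section SmapHelpers

variable {A B : Type*} {𝔄 : InfFrame A} {𝔅 : InfFrame B}

lemma singleton_mem_con (hA : 𝔄.IsCIF) {a x : A} {X : Finset A}
    (hX : X ∈ 𝔄.Con a) (hx : x ∈ X) : ({x} : Finset A) ∈ 𝔄.Con a :=
  hA.con_sub a X {x} (Finset.singleton_subset_iff.mpr hx) hX

/-- Any entailment at a witness can be reduced to entailment from `{a}`. -/
lemma step1_ent (hA : 𝔄.IsCIF) (hAs : 𝔄.Strong)
    {a : A} {X : Finset A} (hX : X ∈ 𝔄.Con a) {c : A}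
    (h : 𝔄.ent a X c ∨ 𝔄.ent a {a} c) : 𝔄.ent a {a} c := by
  rcases h with h | h
  · by_cases hXa : X = {a}
    · exact hXa ▸ h
    · exact hA.cut a {a} X c (hA.self_con a) (hAs a X hX hXa) h
  · exact h

/-- Normal form for entailment in `Ssys`. -/
lemma ent_norm (hA : 𝔄.IsCIF) (hAs : 𝔄.Strong)
    {a : A} {X : Finset A} (hX : X ∈ 𝔄.Con a) {c : A} :
    (Ssys 𝔄).ent (X ∪ {a}) c ↔ 𝔄.ent a {a} c := by
  constructor
  · rintro ⟨a', X', hX', heq, hent⟩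
    have h1 : 𝔄.ent a' {a'} c := step1_ent hA hAs hX' hent
    by_cases haa : a' = a
    · exact haa ▸ h1
    · have ha' : a' ∈ X ∪ {a} := by rw [heq]; simp
      have haX : a' ∈ X := by
        rcases Finset.mem_union.mp ha' with h | h
        · exact h
        · exact absurd (Finset.mem_singleton.mp h) haa
      have hXne : X ≠ {a} := by
        intro h; rw [h] at haX; exact haa (Finset.mem_singleton.mp haX)
      have hca : ({a'} : Finset A) ∈ 𝔄.Con a := singleton_mem_con hA hX haX
      have h2 : 𝔄.ent a {a'} c :=
        hA.ent_transfer a' a {a'} c hca (hA.self_con a') h1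
      have hs : 𝔄.entS a {a} X := hAs a X hX hXne
      refine hA.cut a {a} {a'} c (hA.self_con a) ?_ h2
      intro x hx
      rw [Finset.mem_singleton] at hx
      exact hx ▸ hs a' haX
  · intro h
    exact ⟨a, X, hX, rfl, Or.inr h⟩

/-- Any `H`-fact at a witness can be reduced to one from `{a}`. -/
lemma step1_H (hA : 𝔄.IsCIF) (hAs : 𝔄.Strong) {H : A → Finset A → B → Prop}
    (hH : InfFrame.IsApproxFam 𝔄 𝔅 H)
    {a : A} {X : Finset A} (hX : X ∈ 𝔄.Con a) {b : B}
    (h : H a X b ∨ H a {a} b) : H a {a} b := by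
  rcases h with h | h
  · by_cases hXa : X = {a}
    · exact hXa ▸ h
    · exact hH.af3 a {a} X b (hA.self_con a) hX (hAs a X hX hXa) h
  · exact h

/-- Normal form for `Smap`. -/
lemma smap_norm (hA : 𝔄.IsCIF) (hAs : 𝔄.Strong) {H : A → Finset A → B → Prop}
    (hH : InfFrame.IsApproxFam 𝔄 𝔅 H)
    {a : A} {X : Finset A} (hX : X ∈ 𝔄.Con a) {b : B} :
    Smap 𝔄 H (X ∪ {a}) b ↔ H a {a} b := by
  constructor
  · rintro ⟨a', X', hX', heq, hmem⟩
    have h1 : H a' {a'} b := step1_H hA hAs hH hX' hmem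
    by_cases haa : a' = a
    · exact haa ▸ h1
    · have ha' : a' ∈ X ∪ {a} := by rw [heq]; simp
      have haX : a' ∈ X := by
        rcases Finset.mem_union.mp ha' with h | h
        · exact h
        · exact absurd (Finset.mem_singleton.mp h) haa
      have hXne : X ≠ {a} := by
        intro h; rw [h] at haX; exact haa (Finset.mem_singleton.mp haX)
      have hca : ({a'} : Finset A) ∈ 𝔄.Con a := singleton_mem_con hA hX haX
      have h2 : H a {a'} b := hH.af4 a' a {a'} b hca (hA.self_con a') h1
      have hs : 𝔄.entS a {a} X := hAs a X hX hXne
      refine hH.af3 a {a} {a'} b (hA.self_con a) hca ?_ h2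
      intro x hx
      rw [Finset.mem_singleton] at hx
      exact hx ▸ hs a' haX
  · intro h
    exact ⟨a, X, hX, rfl, Or.inr h⟩

/-- Pull an `H`-fact back along `{a} ⊨ {c} ∪ U`. -/
lemma H_pull (hA : 𝔄.IsCIF) {H : A → Finset A → B → Prop}
    (hH : InfFrame.IsApproxFam 𝔄 𝔅 H)
    {a c : A} {U : Finset A} (hU : U ∈ 𝔄.Con c)
    (h1 : 𝔄.entS a {a} ({c} ∪ U)) {d : B} (h2 : H c U d) : H a {a} d := by
  have hca : ({c} : Finset A) ∈ 𝔄.Con a := by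
    refine hA.sound a {a} {c} (hA.self_con a) ?_
    intro x hx
    rw [Finset.mem_singleton] at hx
    exact hx ▸ h1 c (by simp)
  have hUa : U ∈ 𝔄.Con a := by
    refine hA.sound a {a} U (hA.self_con a) ?_
    intro x hx
    exact h1 x (Finset.mem_union_right _ hx)
  have h3 : H a U d := hH.af4 c a U d hca hU h2
  exact hH.af3 a {a} U d (hA.self_con a) hUa
    (fun x hx => h1 x (Finset.mem_union_right _ hx)) h3

end SmapHelpers

/-- Lemma 11 (`lem-apfapm`): `S(H)` is an approximable mapping from `S(𝔄)` to `S(𝔅)`. -/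
theorem Smap_isApproxMap {A B : Type*} (𝔄 : InfFrame A) (𝔅 : InfFrame B)
    (hA : 𝔄.IsCIF) (hAs : 𝔄.Strong) (hB : 𝔅.IsCIF) (hBs : 𝔅.Strong)
    (H : A → Finset A → B → Prop) (hH : InfFrame.IsApproxFam 𝔄 𝔅 H) :
    InfSys.IsApproxMap (Ssys 𝔄) (Ssys 𝔅) (Smap 𝔄 H) := by
  constructor
  · -- am1
    rintro X ⟨a, Xb, hXb, rfl⟩ Y ⟨k, Yb, hYb, rfl⟩ b hall hent
    have hall' : ∀ c ∈ Yb ∪ ({k} : Finset B), H a {a} c := fun c hc =>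
      (smap_norm hA hAs hH hXb).mp (hall c hc)
    have hent' : 𝔅.ent k {k} b := (ent_norm hB hBs hYb).mp hent
    have hb : H a {a} b := by
      refine hH.af1 a {a} k {k} b (hA.self_con a) (hB.self_con k) ?_ hent'
      intro c hc
      have : c = k := by
        rcases Finset.mem_union.mp hc with h | h <;>
          simpa using h
      exact this ▸ hall' k (by simp)
    exact ⟨a, Xb, hXb, rfl, Or.inr hb⟩
  · -- am2
    rintro X ⟨a, Xb, hXb, rfl⟩ X' ⟨a', Xb', hXb', rfl⟩ b hsub hmem
    have h1 : H a' {a'} b := (smap_norm hA hAs hH hXb').mp hmem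
    have ha' : a' ∈ Xb ∪ {a} := hsub (by simp)
    by_cases haa : a' = a
    · exact ⟨a, Xb, hXb, rfl, Or.inr (haa ▸ h1)⟩
    · have haX : a' ∈ Xb := by
        rcases Finset.mem_union.mp ha' with h | h
        · exact h
        · exact absurd (Finset.mem_singleton.mp h) haa
      have hXne : Xb ≠ {a} := by
        intro h; rw [h] at haX; exact haa (Finset.mem_singleton.mp haX)
      have hca : ({a'} : Finset A) ∈ 𝔄.Con a := singleton_mem_con hA hXb haX
      have h2 : H a {a'} b := hH.af4 a' a {a'} b hca (hA.self_con a') h1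
      have hs : 𝔄.entS a {a} Xb := hAs a Xb hXb hXne
      have h3 : H a {a} b := by
        refine hH.af3 a {a} {a'} b (hA.self_con a) hca ?_ h2
        intro x hx
        rw [Finset.mem_singleton] at hx
        exact hx ▸ hs a' haX
      exact ⟨a, Xb, hXb, rfl, Or.inr h3⟩
  · -- am3
    rintro X ⟨a, Xb, hXb, rfl⟩ X' ⟨a', Xb', hXb', rfl⟩ b hent hmem
    have h1 : H a' {a'} b := (smap_norm hA hAs hH hXb').mp hmem
    have h2 : 𝔄.ent a {a} a' :=
      (ent_norm hA hAs hXb).mp (hent a' (by simp))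
    have hca : ({a'} : Finset A) ∈ 𝔄.Con a := by
      refine hA.sound a {a} {a'} (hA.self_con a) ?_
      intro x hx
      rw [Finset.mem_singleton] at hx
      exact hx ▸ h2
    have h3 : H a {a'} b := hH.af4 a' a {a'} b hca (hA.self_con a') h1
    have h4 : H a {a} b := by
      refine hH.af3 a {a} {a'} b (hA.self_con a) hca ?_ h3
      intro x hx
      rw [Finset.mem_singleton] at hx
      exact hx ▸ h2
    exact ⟨a, Xb, hXb, rfl, Or.inr h4⟩
  · -- am4
    rintro X ⟨a, Xb, hXb, rfl⟩ b hmem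
    have h1 : H a {a} b := (smap_norm hA hAs hH hXb).mp hmem
    obtain ⟨c, U, hU, e, V, hV, hent1, hHc, hent2⟩ :=
      hH.af5 a {a} {b} (hA.self_con a)
        (fun d hd => by rw [Finset.mem_singleton] at hd; exact hd ▸ h1)
    refine ⟨U ∪ {c}, ⟨c, U, hU, rfl⟩, V ∪ {e}, ⟨e, V, hV, rfl⟩, ?_, ?_, ?_⟩
    · intro z hz
      refine ⟨a, Xb, hXb, rfl, Or.inr ?_⟩
      refine hent1 z ?_
      rcases Finset.mem_union.mp hz with h | h
      · exact Finset.mem_union_right _ h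
      · exact Finset.mem_union_left _ h
    · intro d hd
      refine ⟨c, U, hU, rfl, Or.inl ?_⟩
      refine hHc d ?_
      rcases Finset.mem_union.mp hd with h | h
      · exact Finset.mem_union_right _ h
      · exact Finset.mem_union_left _ h
    · exact ⟨e, V, hV, rfl, Or.inl (hent2 b (by simp))⟩
  · -- am5
    rintro X ⟨a, Xb, hXb, rfl⟩ F hall
    have hall' : ∀ d ∈ F, H a {a} d := fun d hd =>
      (smap_norm hA hAs hH hXb).mp (hall d hd)
    obtain ⟨c, U, hU, e, V, hV, hent1, hHc, hent2⟩ :=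
      hH.af5 a {a} F (hA.self_con a) hall'
    have hF : F ∈ 𝔅.Con e := hB.sound e V F hV hent2
    refine ⟨F ∪ {e}, ⟨e, F, hF, rfl⟩, Finset.subset_union_left, ?_⟩
    intro d hd
    rcases Finset.mem_union.mp hd with h | h
    · exact hall d h
    · rw [Finset.mem_singleton] at h
      subst h
      have hHe : H c U d := hHc d (by simp)
      exact ⟨a, Xb, hXb, rfl, Or.inr (H_pull hA hH hU hent1 hHe)⟩
end

section
/- Let A be a strong continuous information frame and let F(S(A)) = (CON, (Ĉon_X)_{X∈CON}, (⊩_X)_{X∈CON}) be the strong continuous information frame obtained by applying the construction F to the continuous information system S(A). Define P_A = (P^A_i)_{i∈A} with X̄ P^A_i Z ⇔ X̄ ⊨_i Z (for X̄ ∈ Con_i and Z ∈ CON, where X̄ ⊨_i Z means X̄ ⊨_i c for all c ∈ Z), and Q_A = (Q^A_K)_{K∈CON} with 𝔛 Q^A_K a ⇔ 𝔛 ⊩_K {a}. Then: (1) P_A is an approximable family from A to F(S(A)); (2) Q_A is an approximable family from F(S(A)) to A; (3) P_A ∘ Q_A = Id_A; (4) Q_A ∘ P_A = Id_{F(S(A))}.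 -/
open scoped Classical

/-- The approximable family `P_𝔄 : 𝔄 ⟶ F(S(𝔄))`: `X̄ P^𝔄_i Z ⇔ X̄ ⊨_i Z`. -/
def Pfam {A : Type*} (𝔄 : InfFrame A) :
    A → Finset A → ConTok (Ssys 𝔄) → Prop :=
  fun i X Z => 𝔄.entS i X Z.1

/-- The approximable family `Q_𝔄 : F(S(𝔄)) ⟶ 𝔄`: `𝔛 Q^𝔄_K a ⇔ 𝔛 ⊩_K {a}`. -/
def Qfam {A : Type*} (𝔄 : InfFrame A) :
    ConTok (Ssys 𝔄) → Finset (ConTok (Ssys 𝔄)) → A → Prop :=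
  fun K 𝔛 a => ∃ E ∈ 𝔛 ∪ ({K} : Finset (ConTok (Ssys 𝔄))),
    (Ssys 𝔄).entS E.1 {a}


section Helpers

open InfFrame Finset

variable {A : Type*} {𝔄 : InfFrame A}

lemma memU {α : Type*} {s t : Finset α} {a : α} :
    a ∈ @Union.union (Finset α)
      (@Finset.instUnion α (fun a b => Classical.propDecidable (a = b))) s t ↔
      a ∈ s ∨ a ∈ t :=
  @Finset.mem_union α (fun a b => Classical.propDecidable (a = b)) s t a

lemma toSelf (h : 𝔄.IsCIF) (hs : 𝔄.Strong) {a c : A} {X : Finset A}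
    (hX : X ∈ 𝔄.Con a) (hc : 𝔄.ent a X c) : 𝔄.ent a {a} c := by
  by_cases hXa : X = {a}
  · rwa [hXa] at hc
  · exact h.cut a {a} X c (h.self_con a) (hs a X hX hXa) hc

/-- Normalisation: entailment in `S(𝔄)` from `X ∪ {a}` is the same as
entailment from `{a}` at `a`, for any representation. -/
lemma ssysEnt_iff (h : 𝔄.IsCIF) (hs : 𝔄.Strong) {a : A} {X E : Finset A}
    (hX : X ∈ 𝔄.Con a) (hE : E = X ∪ {a}) (c : A) :
    (Ssys 𝔄).ent E c ↔ 𝔄.ent a {a} c := by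
  constructor
  · rintro ⟨b, Y, hY, hEq, hor⟩
    have hbc : 𝔄.ent b {b} c := hor.elim (toSelf h hs hY) id
    by_cases hba : b = a
    · rwa [hba] at hbc
    · have hbX : b ∈ X := by
        have hb : b ∈ X ∪ {a} := by
          rw [hE] at hEq; rw [hEq]; simp
        simpa [hba] using hb
      have hbCon : ({b} : Finset A) ∈ 𝔄.Con a :=
        h.con_sub a X {b} (Finset.singleton_subset_iff.2 hbX) hX
      have h1 : 𝔄.ent a {b} c := h.ent_transfer b a {b} c hbCon (h.self_con b) hbc
      have haX : X ≠ {a} := by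
        intro hh; rw [hh] at hbX; exact hba (Finset.mem_singleton.1 hbX)
      have h2 : 𝔄.entS a {a} {b} := by
        intro x hx
        rw [Finset.mem_singleton.1 hx]
        exact hs a X hX haX b hbX
      exact h.cut a {a} {b} c (h.self_con a) h2 h1
  · intro hc
    exact ⟨a, X, hX, hE, Or.inr hc⟩

/-- Cut for the information system `S(𝔄)`. -/
lemma cutSys (h : 𝔄.IsCIF) (hs : 𝔄.Strong) {X Z : Finset A}
    (hX : X ∈ (Ssys 𝔄).Con) (hZ : Z ∈ (Ssys 𝔄).Con)
    (hXZ : (Ssys 𝔄).entS X Z) {c : A} (hZc : (Ssys 𝔄).ent Z c) :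
    (Ssys 𝔄).ent X c := by
  obtain ⟨a, Xb, hXb, hXr⟩ := hX
  obtain ⟨b, Zb, hZb, hZr⟩ := hZ
  have hab : 𝔄.ent a {a} b := by
    have hb : (Ssys 𝔄).ent X b := hXZ b (by rw [hZr]; simp)
    exact (ssysEnt_iff h hs hXb hXr b).1 hb
  have hbc : 𝔄.ent b {b} c := (ssysEnt_iff h hs hZb hZr c).1 hZc
  have hsab : 𝔄.entS a {a} {b} := by
    intro x hx; rw [Finset.mem_singleton] at hx; subst hx; exact hab
  have hbCon : ({b} : Finset A) ∈ 𝔄.Con a :=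
    h.sound a {a} {b} (h.self_con a) hsab
  have h1 : 𝔄.ent a {b} c := h.ent_transfer b a {b} c hbCon (h.self_con b) hbc
  exact (ssysEnt_iff h hs hXb hXr c).2 (h.cut a {a} {b} c (h.self_con a) hsab h1)

/-- Mixed cut: combining `S(𝔄)`-entailment with `𝔄`-entailment. -/
lemma cutMix (h : 𝔄.IsCIF) (hs : 𝔄.Strong) {E : Finset A}
    (hE : E ∈ (Ssys 𝔄).Con) {k b : A} {Y : Finset A} (hY : Y ∈ 𝔄.Con k)
    (hall : ∀ c ∈ ({k} : Finset A) ∪ Y, (Ssys 𝔄).ent E c)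
    (hkb : 𝔄.ent k Y b) : (Ssys 𝔄).ent E b := by
  obtain ⟨a, Xb, hXb, hr⟩ := hE
  have hak : 𝔄.ent a {a} k :=
    (ssysEnt_iff h hs hXb hr k).1 (hall k (by simp))
  have hkCon : ({k} : Finset A) ∈ 𝔄.Con a := by
    refine h.sound a {a} {k} (h.self_con a) ?_
    intro x hx; rw [Finset.mem_singleton] at hx; subst hx; exact hak
  have hYa : Y ∈ 𝔄.Con a := h.con_transfer k a hkCon hY
  have hYb : 𝔄.ent a Y b := h.ent_transfer k a Y b hkCon hY hkb
  have hAY : 𝔄.entS a {a} Y := fun x hx =>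
    (ssysEnt_iff h hs hXb hr x).1 (hall x (Finset.mem_union_right _ hx))
  exact (ssysEnt_iff h hs hXb hr b).2 (h.cut a {a} Y b (h.self_con a) hAY hYb)

/-- If `X ⊨_i E` and `E ⊢ b` in `S(𝔄)`, then `X ⊨_i b`. -/
lemma lemL (h : 𝔄.IsCIF) (hs : 𝔄.Strong) {i : A} {X E : Finset A}
    (hX : X ∈ 𝔄.Con i) (hE : E ∈ (Ssys 𝔄).Con)
    (hall : ∀ c ∈ E, 𝔄.ent i X c) {b : A} (hEb : (Ssys 𝔄).ent E b) :
    𝔄.ent i X b := by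
  obtain ⟨a, Xb, hXb, hr⟩ := hE
  have hab : 𝔄.ent a {a} b := (ssysEnt_iff h hs hXb hr b).1 hEb
  have hia : 𝔄.ent i X a := hall a (by rw [hr]; simp)
  have hSa : 𝔄.entS i X {a} := by
    intro x hx; rw [Finset.mem_singleton] at hx; subst hx; exact hia
  have haCon : ({a} : Finset A) ∈ 𝔄.Con i := h.sound i X {a} hX hSa
  have h1 : 𝔄.ent i {a} b := h.ent_transfer a i {a} b haCon (h.self_con a) hab
  exact h.cut i X {a} b hX hSa h1

/-- Normalisation for `Q`: entailments can be pulled back to `K`. -/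
lemma Qnorm (h : 𝔄.IsCIF) (hs : 𝔄.Strong) {K : ConTok (Ssys 𝔄)}
    {𝔛 : Finset (ConTok (Ssys 𝔄))} (h𝔛 : 𝔛 ∈ (Fframe (Ssys 𝔄)).Con K)
    {c : A} (hQ : Qfam 𝔄 K 𝔛 c) : (Ssys 𝔄).ent K.1 c := by
  obtain ⟨E, hEmem, hent⟩ := hQ
  have hEc : (Ssys 𝔄).ent E.1 c := hent c (Finset.mem_singleton_self c)
  rcases Finset.mem_union.1 hEmem with hEm | hEm
  · have h𝔛' : 𝔛 = {K} ∨ ∀ Y ∈ 𝔛, (Ssys 𝔄).entS K.1 Y.1 := h𝔛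
    rcases h𝔛' with h1 | h1
    · rw [h1, Finset.mem_singleton] at hEm; rw [hEm] at hEc; exact hEc
    · exact cutSys h hs K.2 E.2 (h1 E hEm) hEc
  · rw [Finset.mem_singleton] at hEm; rw [hEm] at hEc; exact hEc

lemma Qof {K : ConTok (Ssys 𝔄)} {𝔛 : Finset (ConTok (Ssys 𝔄))}
    {c : A} (hc : (Ssys 𝔄).ent K.1 c) : Qfam 𝔄 K 𝔛 c := by
  refine ⟨K, by simp, ?_⟩
  intro x hx
  rw [Finset.mem_singleton.1 hx]
  exact hc

end Helpers

/-- Lemma 12 (`lem-propPQ`): `P_𝔄` and `Q_𝔄` are mutually inverse approximable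
families between `𝔄` and `F(S(𝔄))`. -/
theorem Pfam_Qfam_props {A : Type*} (𝔄 : InfFrame A) (h : 𝔄.IsCIF) (hs : 𝔄.Strong) :
    InfFrame.IsApproxFam 𝔄 (Fframe (Ssys 𝔄)) (Pfam 𝔄) ∧
    InfFrame.IsApproxFam (Fframe (Ssys 𝔄)) 𝔄 (Qfam 𝔄) ∧
    InfFrame.FamEq 𝔄
      (InfFrame.compFam (Fframe (Ssys 𝔄)) (Pfam 𝔄) (Qfam 𝔄)) 𝔄.ent ∧
    InfFrame.FamEq (Fframe (Ssys 𝔄))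
      (InfFrame.compFam 𝔄 (Qfam 𝔄) (Pfam 𝔄)) (Fframe (Ssys 𝔄)).ent := by
  refine ⟨?_, ?_, ?_, ?_⟩
  · -- P is an approximable family
    constructor
    · -- af1
      intro i X k Y b hX hY hall hent
      obtain ⟨E, hEmem, hEb⟩ := hent
      intro x hx
      refine lemL h hs hX E.2 ?_ (hEb x hx)
      intro c hc
      rcases Finset.mem_union.1 hEmem with hE | hE
      · exact hall E (memU.mpr (Or.inr hE)) c hc
      · exact hall E (memU.mpr (Or.inl hE)) c hc
    · -- af2
      intro i X X' b hX hX' hsub hb x hx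
      exact h.weaken i X X' x hX hX' hsub (hb x hx)
    · -- af3
      intro i X X' b hX hX' hent hb x hx
      exact h.cut i X X' x hX hent (hb x hx)
    · -- af4
      intro i j X b hij hX hb x hx
      exact h.ent_transfer i j X x hij hX (hb x hx)
    · -- af5
      intro i X F hX hall
      classical
      set Yb : Finset A := F.biUnion (fun t => t.1) with hYbdef
      have hXY : 𝔄.entS i X Yb := by
        intro x hx
        obtain ⟨t, ht, hxt⟩ := Finset.mem_biUnion.1 hx
        exact hall t ht x hxt
      obtain ⟨e₁, Z₁, hZ₁, h1, h2⟩ := h.interp i X Yb hX hXY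
      obtain ⟨e₂, Z₂, hZ₂, h3, h4⟩ := h.interp e₁ Z₁ Yb hZ₁ h2
      refine ⟨e₁, Z₁, hZ₁, ⟨Z₂ ∪ {e₂}, ⟨e₂, Z₂, hZ₂, rfl⟩⟩, ∅,
        Or.inr (fun Y hY => absurd hY (Finset.notMem_empty Y)), h1, ?_, ?_⟩
      · intro d hd
        have hd' : d = (⟨Z₂ ∪ {e₂}, ⟨e₂, Z₂, hZ₂, rfl⟩⟩ : ConTok (Ssys 𝔄)) := by
          simpa using hd
        subst hd'
        intro x hx
        have hx' : x ∈ Z₂ ∪ {e₂} := hx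
        exact h3 x (Finset.mem_union.mpr (Or.symm (Finset.mem_union.mp hx')))
      · intro d hd
        refine ⟨⟨Z₂ ∪ {e₂}, ⟨e₂, Z₂, hZ₂, rfl⟩⟩, by simp, ?_⟩
        intro x hx
        exact ⟨e₂, Z₂, hZ₂, rfl, Or.inl (h4 x (Finset.mem_biUnion.2 ⟨d, hd, hx⟩))⟩
  · -- Q is an approximable family
    constructor
    · -- af1
      intro K 𝔛 k Y b h𝔛 hY hall hkb
      have hn : ∀ c ∈ ({k} : Finset A) ∪ Y, (Ssys 𝔄).ent K.1 c :=
        fun c hc => Qnorm h hs h𝔛 (hall c hc)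
      exact Qof (cutMix h hs K.2 hY hn hkb)
    · -- af2
      intro K 𝔛 𝔛' b h𝔛 h𝔛' hsub hb
      obtain ⟨E, hE, hEb⟩ := hb
      refine ⟨E, ?_, hEb⟩
      rcases Finset.mem_union.1 hE with h1 | h1
      · exact Finset.mem_union.mpr (Or.inl (hsub h1))
      · exact Finset.mem_union.mpr (Or.inr h1)
    · -- af3
      intro K 𝔛 𝔛' b h𝔛 h𝔛' hent hb
      obtain ⟨E', hE', hEb⟩ := hb
      rcases Finset.mem_union.1 hE' with h1 | h1
      · obtain ⟨E, hE, hEE'⟩ := hent E' h1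
        refine ⟨E, hE, ?_⟩
        intro x hx
        rw [Finset.mem_singleton.1 hx]
        exact cutSys h hs E.2 E'.2 hEE' (hEb b (Finset.mem_singleton_self b))
      · rw [Finset.mem_singleton] at h1
        exact ⟨K, by simp, h1 ▸ hEb⟩
    · -- af4
      intro K K' 𝔛 b hKK' h𝔛 hb
      obtain ⟨E, hE, hEb⟩ := hb
      rcases Finset.mem_union.1 hE with h1 | h1
      · exact ⟨E, Finset.mem_union.mpr (Or.inl h1), hEb⟩
      · rw [Finset.mem_singleton] at h1
        rw [h1] at hEb
        have hKK : ({K} : Finset (ConTok (Ssys 𝔄))) = {K'} ∨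
            ∀ W ∈ ({K} : Finset (ConTok (Ssys 𝔄))), (Ssys 𝔄).entS K'.1 W.1 := hKK'
        rcases hKK with h2 | h2
        · have hK : K = K' := Finset.singleton_inj.1 h2
          exact ⟨K', by simp, hK ▸ hEb⟩
        · refine ⟨K', by simp, ?_⟩
          intro x hx
          rw [Finset.mem_singleton.1 hx]
          exact cutSys h hs K'.2 K.2 (h2 K (Finset.mem_singleton_self K))
            (hEb b (Finset.mem_singleton_self b))
    · -- af5
      intro K 𝔛 F h𝔛 hall
      have hn : ∀ c ∈ F, (Ssys 𝔄).ent K.1 c :=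
        fun c hc => Qnorm h hs h𝔛 (hall c hc)
      obtain ⟨a, Xb, hXb, hr⟩ := K.2
      have hAF : 𝔄.entS a {a} F := fun c hc => (ssysEnt_iff h hs hXb hr c).1 (hn c hc)
      obtain ⟨e₁, Z₁, hZ₁, h1, h2⟩ := h.interp a {a} F (h.self_con a) hAF
      obtain ⟨e₂, Z₂, hZ₂, h3, h4⟩ := h.interp e₁ Z₁ F hZ₁ h2
      refine ⟨⟨Z₁ ∪ {e₁}, ⟨e₁, Z₁, hZ₁, rfl⟩⟩, ∅,
        Or.inr (fun Y hY => absurd hY (Finset.notMem_empty Y)), e₂, Z₂, hZ₂, ?_, ?_, h4⟩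
      · intro W hW
        have hW' : W = (⟨Z₁ ∪ {e₁}, ⟨e₁, Z₁, hZ₁, rfl⟩⟩ : ConTok (Ssys 𝔄)) := by
          simpa using hW
        subst hW'
        refine ⟨K, by simp, ?_⟩
        intro x hx
        have hx' : x ∈ Z₁ ∪ {e₁} := hx
        exact ⟨a, Xb, hXb, hr, Or.inr (h1 x (Finset.mem_union.mpr (Or.symm (Finset.mem_union.mp hx'))))⟩
      · intro d hd
        refine ⟨⟨Z₁ ∪ {e₁}, ⟨e₁, Z₁, hZ₁, rfl⟩⟩, by simp, ?_⟩
        intro x hx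
        rw [Finset.mem_singleton.1 hx]
        exact ⟨e₁, Z₁, hZ₁, rfl, Or.inl (h3 d hd)⟩
  · -- P ∘ Q = Id
    intro i X hX b
    constructor
    · rintro ⟨e, V, hV, hPe, E, hEmem, hEb⟩
      refine lemL h hs hX E.2 ?_ (hEb b (Finset.mem_singleton_self b))
      intro c hc
      rcases Finset.mem_union.1 hEmem with h1 | h1
      · exact hPe E (memU.mpr (Or.inr h1)) c hc
      · exact hPe E (memU.mpr (Or.inl h1)) c hc
    · intro hb
      have hSb : 𝔄.entS i X {b} := by
        intro x hx
        rw [Finset.mem_singleton.1 hx]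
        exact hb
      obtain ⟨e₁, Z₁, hZ₁, h1, h2⟩ := h.interp i X {b} hX hSb
      refine ⟨⟨Z₁ ∪ {e₁}, ⟨e₁, Z₁, hZ₁, rfl⟩⟩, ∅,
        Or.inr (fun Y hY => absurd hY (Finset.notMem_empty Y)), ?_, ?_⟩
      · intro c hc
        have hc' : c = (⟨Z₁ ∪ {e₁}, ⟨e₁, Z₁, hZ₁, rfl⟩⟩ : ConTok (Ssys 𝔄)) := by
          simpa using hc
        subst hc'
        intro x hx
        have hx' : x ∈ Z₁ ∪ {e₁} := hx
        exact h1 x (Finset.mem_union.mpr (Or.symm (Finset.mem_union.mp hx')))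
      · refine ⟨⟨Z₁ ∪ {e₁}, ⟨e₁, Z₁, hZ₁, rfl⟩⟩, by simp, ?_⟩
        intro x hx
        rw [Finset.mem_singleton.1 hx]
        exact ⟨e₁, Z₁, hZ₁, rfl, Or.inl (h2 b (Finset.mem_singleton_self b))⟩
  · -- Q ∘ P = Id
    intro K 𝔛 h𝔛 b
    constructor
    · rintro ⟨e, V, hV, hQs, hP⟩
      refine ⟨K, by simp, ?_⟩
      intro x hx
      exact cutMix h hs K.2 hV (fun c hc => Qnorm h hs h𝔛 (hQs c hc)) (hP x hx)
    · intro hb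
      obtain ⟨E, hEmem, hEb⟩ := hb
      have hKb : (Ssys 𝔄).entS K.1 b.1 := by
        rcases Finset.mem_union.1 hEmem with h1 | h1
        · have h𝔛' : 𝔛 = {K} ∨ ∀ Y ∈ 𝔛, (Ssys 𝔄).entS K.1 Y.1 := h𝔛
          rcases h𝔛' with h2 | h2
          · rw [h2, Finset.mem_singleton] at h1
            rw [← h1]
            exact hEb
          · intro x hx
            exact cutSys h hs K.2 E.2 (h2 E h1) (hEb x hx)
        · rw [Finset.mem_singleton] at h1
          rw [← h1]
          exact hEb
      obtain ⟨a, Xb, hXb, hr⟩ := K.2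
      have hab : 𝔄.entS a {a} b.1 :=
        fun x hx => (ssysEnt_iff h hs hXb hr x).1 (hKb x hx)
      obtain ⟨e₁, Z₁, hZ₁, h1, h2⟩ := h.interp a {a} b.1 (h.self_con a) hab
      refine ⟨e₁, Z₁, hZ₁, ?_, h2⟩
      intro c hc
      refine ⟨K, by simp, ?_⟩
      intro x hx
      rw [Finset.mem_singleton.1 hx]
      exact ⟨a, Xb, hXb, hr, Or.inr (h1 c hc)⟩
end
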